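/- Let γ: Cl(V,h) → End_ℂ(S) be a weakly faithful complex Clifford representation. Then for every φ ∈ L_γ the automorphism Ad_γ(φ) of V is an isometry of (V,h), and Ad_γ: L_γ → O(V,h) is a group homomorphism. Moreover, if dim V is even then Ad_γ is surjective onto O(V,h), and if dim V is odd then the image of Ad_γ contains SO(V,h). -/

import Mathlib

noncomputable section

namespace CpxCliffordRep

/-- The image `γ(ι(V))` of `V` in `End_ℂ(S)` under a complex Clifford representation. -/
def gammaV {V : Type*} [AddCommGroup V] [Module ℝ V]
    {S : Type*} [AddCommGroup S] [Module ℝ S] [Module ℂ S] [IsScalarTower ℝ ℂ S]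
    (Q : QuadraticForm ℝ V) (γ : CliffordAlgebra Q →ₐ[ℝ] Module.End ℂ S) :
    Set (Module.End ℂ S) :=
  Set.range fun v : V => γ (CliffordAlgebra.ι Q v)

/-- A complex Clifford representation is weakly faithful if `v ↦ γ(ι(v))` is injective. -/
def WeaklyFaithful {V : Type*} [AddCommGroup V] [Module ℝ V]
    {S : Type*} [AddCommGroup S] [Module ℝ S] [Module ℂ S] [IsScalarTower ℝ ℂ S]
    (Q : QuadraticForm ℝ V) (γ : CliffordAlgebra Q →ₐ[ℝ] Module.End ℂ S) : Prop :=
  Function.Injective fun v : V => γ (CliffordAlgebra.ι Q v)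

/-- Conjugation `A ↦ φ ∘ A ∘ φ⁻¹` by a ℂ-linear isomorphism `φ : S ≃ S'`. -/
def conjMap {S S' : Type*} [AddCommGroup S] [Module ℂ S] [AddCommGroup S'] [Module ℂ S']
    (φ : S ≃ₗ[ℂ] S') (A : Module.End ℂ S) : Module.End ℂ S' :=
  φ.toLinearMap ∘ₗ A ∘ₗ φ.symm.toLinearMap

/-- `(φ₀, φ)` is a morphism of complex Clifford representations from `γ` to `γ'`:
`φ₀` is an isometry from `(V,h)` to `(V',h')` and
`γ'(Cl(φ₀)(x)) ∘ φ = φ ∘ γ(x)` for all `x ∈ Cl(V,h)`, where `Cl(φ₀)` is the (unique)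
unital algebra morphism induced by `φ₀`, characterized by `Cl(φ₀)(ι(v)) = ι'(φ₀(v))`. -/
def IsRepMor {V V' : Type*} [AddCommGroup V] [Module ℝ V] [AddCommGroup V'] [Module ℝ V']
    {S S' : Type*} [AddCommGroup S] [Module ℝ S] [Module ℂ S] [IsScalarTower ℝ ℂ S]
    [AddCommGroup S'] [Module ℝ S'] [Module ℂ S'] [IsScalarTower ℝ ℂ S']
    (h : LinearMap.BilinForm ℝ V) (h' : LinearMap.BilinForm ℝ V')
    (γ : CliffordAlgebra h.toQuadraticMap →ₐ[ℝ] Module.End ℂ S)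
    (γ' : CliffordAlgebra h'.toQuadraticMap →ₐ[ℝ] Module.End ℂ S')
    (φ₀ : V →ₗ[ℝ] V') (φ : S →ₗ[ℂ] S') : Prop :=
  (∀ v w : V, h' (φ₀ v) (φ₀ w) = h v w) ∧
  ∃ Φ : CliffordAlgebra h.toQuadraticMap →ₐ[ℝ] CliffordAlgebra h'.toQuadraticMap,
    (∀ v : V, Φ (CliffordAlgebra.ι h.toQuadraticMap v) =
        CliffordAlgebra.ι h'.toQuadraticMap (φ₀ v)) ∧
    ∀ x : CliffordAlgebra h.toQuadraticMap, (γ' (Φ x)) ∘ₗ φ = φ ∘ₗ (γ x)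

/-- Membership in the complex Lipschitz group `L_γ` of a (weakly faithful) complex Clifford
representation: conjugation by `φ` preserves `γ(ι(V))`. -/
def memLip {V : Type*} [AddCommGroup V] [Module ℝ V]
    {S : Type*} [AddCommGroup S] [Module ℝ S] [Module ℂ S] [IsScalarTower ℝ ℂ S]
    (Q : QuadraticForm ℝ V) (γ : CliffordAlgebra Q →ₐ[ℝ] Module.End ℂ S)
    (φ : S ≃ₗ[ℂ] S) : Prop :=
  conjMap φ '' gammaV Q γ = gammaV Q γ

/-- A complex Clifford representation is irreducible if the only invariant complex
subspaces of `S` are `0` and `S`. -/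
def IsIrred {V : Type*} [AddCommGroup V] [Module ℝ V]
    {S : Type*} [AddCommGroup S] [Module ℝ S] [Module ℂ S] [IsScalarTower ℝ ℂ S]
    (Q : QuadraticForm ℝ V) (γ : CliffordAlgebra Q →ₐ[ℝ] Module.End ℂ S) : Prop :=
  ∀ W : Submodule ℂ S, (∀ (x : CliffordAlgebra Q), ∀ w ∈ W, γ x w ∈ W) → W = ⊥ ∨ W = ⊤

/-- `(V,h)` has signature `(p,q)`: there is a basis `e₁,…,e_{p+q}` with
`h(eᵢ,eⱼ) = 0` for `i ≠ j`, `h(eᵢ,eᵢ) = 1` for `i ≤ p` and `h(eᵢ,eᵢ) = -1` for `i > p`. -/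
def HasSignature {V : Type*} [AddCommGroup V] [Module ℝ V]
    (h : LinearMap.BilinForm ℝ V) (p q : ℕ) : Prop :=
  ∃ b : Module.Basis (Fin (p + q)) ℝ V, ∀ i j : Fin (p + q),
    h (b i) (b j) = if i = j then (if (i : ℕ) < p then 1 else -1) else 0

end CpxCliffordRep

/-!
Conjugation by `φ ∈ L_γ` is an `ℝ`-algebra automorphism of `End_ℂ(S)` preserving `γ(ι(V))`.
As `v ↦ γ(ι v)` is linear and injective, it transports to a linear map `Ad_γ(φ)` of `V`, and as
`γ(ι v)² = h(v,v)·1`, this map preserves `h`. Conversely, conjugation by `γ(ι u)` for an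
anisotropic `u` realizes `-s_u`, minus the reflection in `u`. By Cartan–Dieudonné the reflections
generate `O(V,h)`, and `f ↦ det(f)·f` is a homomorphism sending `s_u` to `-s_u`; hence `det(f)·f`
lies in the image of `Ad_γ` for every isometry `f`. This gives `SO(V,h)`, and in even dimension
`-1 ∈ SO(V,h)`, so every `s_u = (-1)·(-s_u)` and with them all of `O(V,h)` lie in the image.
-/

open Module
open LinearMap (BilinForm)

theorem LinearMap.existsUnique_apply_eq_of_injective {R M N : Type*} [Semiring R]
    [AddCommMonoid M] [Module R M] [AddCommMonoid N] [Module R N] {Γ : M →ₗ[R] N}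
    (hΓ : Function.Injective Γ) {T : N →ₗ[R] N} (hT : ∀ v, T (Γ v) ∈ LinearMap.range Γ) :
    ∃! f : M →ₗ[R] M, ∀ v, Γ (f v) = T (Γ v) :=
  ⟨(LinearEquiv.ofInjective Γ hΓ).symm ∘ₗ (T ∘ₗ Γ).codRestrict _ hT, fun v => by simp,
    fun g hg => LinearMap.ext fun v => hΓ (by simp [hg])⟩

namespace LinearEquiv

variable {K V : Type*} [CommRing K] [AddCommGroup V] [Module K V]

theorem det_toModuleAut [Free K V] (c : Kˣ) :
    LinearEquiv.det (DistribMulAction.toModuleAut K V c) = c ^ finrank K V := by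
  ext
  rw [LinearEquiv.coe_det, show (DistribMulAction.toModuleAut K V c : V →ₗ[K] V) =
    (c : K) • LinearMap.id by ext; simp [Units.smul_def], LinearMap.det_smul, LinearMap.det_id]
  simp

def detSMul : (V ≃ₗ[K] V) →* (V ≃ₗ[K] V) where
  toFun f := DistribMulAction.toModuleAut K V (LinearEquiv.det f) * f
  map_one' := by simp only [map_one, mul_one]
  map_mul' f g := LinearEquiv.ext fun v => by
    simp only [map_mul, mul_apply, DistribMulAction.toModuleAut_apply,
      DistribMulAction.toLinearEquiv_apply, Units.smul_def, map_smul]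

theorem detSMul_apply (f : V ≃ₗ[K] V) :
    detSMul f = DistribMulAction.toModuleAut K V (LinearEquiv.det f) * f := rfl

end LinearEquiv

namespace Submodule
variable {R M : Type*} [Ring R] [AddCommGroup M] [Module R M] {p q : Submodule R M}

def autOfIsCompl (hpq : IsCompl p q) : (q ≃ₗ[R] q) →* (M ≃ₗ[R] M) where
  toFun e := ((p.prodEquivOfIsCompl q hpq).symm.trans ((LinearEquiv.refl R p).prodCongr e)).trans
    (p.prodEquivOfIsCompl q hpq)
  map_one' := LinearEquiv.ext fun x => (p.prodEquivOfIsCompl q hpq).apply_symm_apply x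
  map_mul' e f := LinearEquiv.ext fun x => by
    simp only [LinearEquiv.trans_apply, LinearEquiv.mul_apply, LinearEquiv.symm_apply_apply,
      LinearEquiv.prodCongr_apply]
    rfl

variable (hpq : IsCompl p q) (e : q ≃ₗ[R] q)

theorem autOfIsCompl_apply_of_mem_left {x : M} (hx : x ∈ p) : autOfIsCompl hpq e x = x := by
  simp [autOfIsCompl, prodEquivOfIsCompl_symm_apply_left p q hpq ⟨x, hx⟩]

theorem autOfIsCompl_apply_right (y : q) : autOfIsCompl hpq e y = e y := by
  simp [autOfIsCompl, prodEquivOfIsCompl_symm_apply_right p q hpq y]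

theorem autOfIsCompl_eq {g : M ≃ₗ[R] M} (hp : ∀ x ∈ p, g x = x) (hq : ∀ y : q, g y = e y) :
    autOfIsCompl hpq e = g :=
  LinearMap.ext_on_codisjoint hpq.codisjoint
    (fun x hx => by rw [autOfIsCompl_apply_of_mem_left hpq e hx, hp x hx])
    (fun y hy => by rw [autOfIsCompl_apply_right hpq e ⟨y, hy⟩, hq ⟨y, hy⟩])

theorem det_autOfIsCompl {K V : Type*} [Field K] [AddCommGroup V] [Module K V]
    [FiniteDimensional K V] {p q : Submodule K V} (hpq : IsCompl p q) (e : q ≃ₗ[K] q) :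
    LinearEquiv.det (autOfIsCompl hpq e) = LinearEquiv.det e := by
  simp only [autOfIsCompl, MonoidHom.coe_mk, OneHom.coe_mk, LinearEquiv.det_conj, ← Units.val_inj]
  rw [LinearEquiv.coe_det, LinearEquiv.coe_det]
  exact (LinearMap.det_prodMap (LinearMap.id : p →ₗ[K] p) (e : q →ₗ[K] q)).trans
    (by rw [LinearMap.det_id, one_mul])

end Submodule

namespace LinearMap.BilinForm
variable {K V : Type*} [Field K] [AddCommGroup V] [Module K V] {B : BilinForm K V}

theorem IsSymm.apply_eq_of_apply_self_eq [NeZero (2 : K)] (hB : B.IsSymm) {f : V →ₗ[K] V}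
    (hf : ∀ v, B (f v) (f v) = B v v) (v w : V) : B (f v) (f w) = B v w := by
  have h := hf (v + w)
  simp only [map_add, LinearMap.add_apply, hf v, hf w, hB.eq (f w) (f v), hB.eq w v] at h
  exact mul_left_cancel₀ two_ne_zero (by linear_combination h)

def orthogonalGroup (B : BilinForm K V) : Subgroup (V ≃ₗ[K] V) where
  carrier := {f | ∀ v w, B (f v) (f w) = B v w}
  mul_mem' hf hg v w := (hf _ _).trans (hg v w)
  one_mem' _ _ := rfl
  inv_mem' {f} hf v w := by simpa using (hf (f.symm v) (f.symm w)).symm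

theorem apply_two_div_smul_self {u : V} (hu : B u u ≠ 0) : ((2 / B u u) • B u) u = 2 := by
  simp [div_mul_cancel₀ _ hu]

def reflection (B : BilinForm K V) {u : V} (hu : B u u ≠ 0) : V ≃ₗ[K] V :=
  Module.reflection (apply_two_div_smul_self hu)

variable {u : V} (hu : B u u ≠ 0)

theorem reflection_apply (v : V) : B.reflection hu v = v - (2 * B u v / B u u) • u := by
  rw [reflection, Module.reflection_apply, LinearMap.smul_apply, smul_eq_mul, div_mul_eq_mul_div]

theorem reflection_apply_self : B.reflection hu u = -u := Module.reflection_apply_self _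

theorem reflection_apply_of_isOrtho {v : V} (huv : B u v = 0) : B.reflection hu v = v := by
  simp [reflection_apply, huv]

theorem reflection_mem_orthogonalGroup (hB : B.IsSymm) : B.reflection hu ∈ B.orthogonalGroup := by
  intro v w
  simp only [reflection_apply, map_sub, map_smul, LinearMap.sub_apply, LinearMap.smul_apply,
    smul_eq_mul, ← hB.eq v u, ← hB.eq w u]
  field_simp
  ring

def reflections (B : BilinForm K V) : Set (V ≃ₗ[K] V) :=
  {s | ∃ u, ∃ hu : B u u ≠ 0, B.reflection hu = s}

theorem closure_reflections_le_orthogonalGroup (hB : B.IsSymm) :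
    Subgroup.closure B.reflections ≤ B.orthogonalGroup :=
  Subgroup.closure_le _ |>.mpr <| by
    rintro _ ⟨u, hu, rfl⟩
    exact reflection_mem_orthogonalGroup hu hB

theorem reflection_sub_apply (hB : B.IsSymm) {x y : V} (hxy : B x x = B y y)
    (hsub : B (x - y) (x - y) ≠ 0) : B.reflection hsub x = y := by
  have hyx : B y x = B x y := (hB.eq x y).symm
  have hnum : B (x - y) x = B x x - B x y := by simp [hyx]
  have hden : B (x - y) (x - y) = 2 * (B x x - B x y) := by
    simp only [map_sub, LinearMap.sub_apply, hxy, hyx]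
    ring
  rw [reflection_apply, hnum, ← hden, div_self hsub, one_smul, sub_sub_cancel]

theorem exists_mem_closure_reflections_apply_eq [NeZero (2 : K)] (hB : B.IsSymm) {x y : V}
    (hxy : B x x = B y y) (hy : B y y ≠ 0) :
    ∃ r ∈ Subgroup.closure B.reflections, r x = y := by
  -- `B (x - y) (x - y) + B (x + y) (x + y) = 4 B y y ≠ 0`, so `x - y` or `x + y` is anisotropic.
  by_cases hsub : B (x - y) (x - y) = 0
  · have hyx : B y x = B x y := (hB.eq x y).symm
    have hadd : B (x - -y) (x - -y) = 2 * 2 * B y y := by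
      have : B (x - y) (x - y) + B (x - -y) (x - -y) = 2 * (B x x + B y y) := by
        simp only [map_sub, LinearMap.sub_apply, hyx, sub_neg_eq_add, map_add, LinearMap.add_apply]
        ring
      rw [hsub, zero_add, hxy] at this
      rw [this]
      ring
    have hadd0 : B (x - -y) (x - -y) ≠ 0 := by
      rw [hadd]
      exact mul_ne_zero (mul_ne_zero two_ne_zero two_ne_zero) hy
    refine ⟨B.reflection hy * B.reflection hadd0,
      mul_mem (Subgroup.subset_closure ⟨y, hy, rfl⟩) (Subgroup.subset_closure ⟨_, hadd0, rfl⟩), ?_⟩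
    rw [LinearEquiv.mul_apply, reflection_sub_apply hB (by simpa using hxy), map_neg,
      reflection_apply_self, neg_neg]
  · exact ⟨B.reflection hsub, Subgroup.subset_closure ⟨_, hsub, rfl⟩,
      reflection_sub_apply hB hxy hsub⟩

theorem det_reflection [FiniteDimensional K V] : LinearEquiv.det (B.reflection hu) = -1 := by
  have hu0 : u ≠ 0 := by rintro rfl; simp at hu
  have hc := (isCompl_span_singleton_orthogonal hu).symm
  rw [← Submodule.autOfIsCompl_eq hc (DistribMulAction.toModuleAut K _ (-1 : Kˣ))
      (g := B.reflection hu) ?_ ?_,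
    Submodule.det_autOfIsCompl, LinearEquiv.det_toModuleAut, finrank_span_singleton hu0, pow_one]
  · intro x hx
    exact reflection_apply_of_isOrtho hu
      (mem_orthogonal_iff.mp hx u (Submodule.mem_span_singleton_self u))
  · rintro ⟨y, hy⟩
    obtain ⟨c, rfl⟩ := Submodule.mem_span_singleton.mp hy
    simp [reflection_apply_self]

theorem detSMul_reflection [FiniteDimensional K V] :
    LinearEquiv.detSMul (B.reflection hu) =
      DistribMulAction.toModuleAut K V (-1 : Kˣ) * B.reflection hu := by
  rw [LinearEquiv.detSMul_apply, det_reflection]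

theorem map_orthogonal_span_singleton {g : V ≃ₗ[K] V} (hg : g ∈ B.orthogonalGroup) {v : V}
    (hgv : g v = v) : (B.orthogonal (K ∙ v)).map (g : V →ₗ[K] V) = B.orthogonal (K ∙ v) := by
  ext x
  rw [Submodule.mem_map_equiv, orthogonal_span_singleton_eq_toLin_ker, LinearMap.mem_ker,
    LinearMap.mem_ker]
  simp only [toLinHomAux₁]
  rw [← hg v, hgv, LinearEquiv.apply_symm_apply]

theorem map_closure_reflections_restrict_le (hB : B.IsRefl) {p : Submodule K V}
    (hc : IsCompl p (B.orthogonal p)) :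
    (Subgroup.closure (B.restrict (B.orthogonal p)).reflections).map
      (Submodule.autOfIsCompl hc) ≤ Subgroup.closure B.reflections := by
  rw [MonoidHom.map_closure]
  refine Subgroup.closure_mono ?_
  rintro _ ⟨_, ⟨w, hw, rfl⟩, rfl⟩
  have hw' : B w w ≠ 0 := hw
  refine ⟨w, hw', (Submodule.autOfIsCompl_eq hc _ (fun x hx => ?_) fun y => ?_).symm⟩
  · exact reflection_apply_of_isOrtho hw' (hB _ _ (mem_orthogonal_iff.mp w.2 x hx))
  · simp [reflection_apply]

theorem orthogonalGroup_le_closure_reflections [NeZero (2 : K)] [FiniteDimensional K V]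
    (hB : B.IsSymm) (hnd : B.Nondegenerate) :
    B.orthogonalGroup ≤ Subgroup.closure B.reflections := by
  induction hn : finrank K V generalizing V with
  | zero =>
    have : Subsingleton V := finrank_zero_iff.mp hn
    intro f _
    rw [show f = 1 from LinearEquiv.ext fun _ => Subsingleton.elim _ _]
    exact one_mem _
  | succ n ih =>
    intro f hf
    have : Nontrivial V := finrank_pos_iff (R := K).mp (by omega)
    have := invertibleOfNonzero (two_ne_zero : (2 : K) ≠ 0)
    obtain ⟨v, hv⟩ := exists_bilinForm_self_ne_zero hnd.ne_zero (isSymm_iff.mp hB)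
    obtain ⟨r, hr, hrv⟩ :=
      exists_mem_closure_reflections_apply_eq hB (hf v v).symm ((hf v v).symm ▸ hv)
    -- `g` fixes `v`, so it is determined by its restriction to `v^⊥`, where induction applies.
    set g := r⁻¹ * f
    have hg : g ∈ B.orthogonalGroup :=
      mul_mem (inv_mem (closure_reflections_le_orthogonalGroup hB hr)) hf
    have hgv : g v = v := by simp [g, ← hrv]
    set W := B.orthogonal (K ∙ v)
    have hc : IsCompl (K ∙ v) W := isCompl_span_singleton_orthogonal hv
    have hgW := map_orthogonal_span_singleton hg hgv
    have hWn : finrank K W = n := by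
      have := Submodule.finrank_add_eq_of_isCompl hc
      rw [finrank_span_singleton (by rintro rfl; simp at hv)] at this
      omega
    have hgW' : g.ofSubmodules W W hgW ∈ Subgroup.closure (B.restrict W).reflections :=
      ih (hB.restrict W) (B.restrict_nondegenerate_orthogonal_spanSingleton hnd hB.isRefl hv) hWn
        fun a b => hg a b
    have hgr : g ∈ Subgroup.closure B.reflections := by
      rw [← Submodule.autOfIsCompl_eq hc (g.ofSubmodules W W hgW) (g := g) ?_ fun y => rfl]
      · exact map_closure_reflections_restrict_le hB.isRefl hc (Subgroup.mem_map_of_mem _ hgW')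
      · intro x hx
        obtain ⟨c, rfl⟩ := Submodule.mem_span_singleton.mp hx
        rw [map_smul, hgv]
    simpa [g] using mul_mem hr hgr

end LinearMap.BilinForm

namespace CpxCliffordRep

open CliffordAlgebra LinearMap.BilinForm

section conjMap

variable {S S' S'' : Type*} [AddCommGroup S] [Module ℂ S] [AddCommGroup S'] [Module ℂ S']
  [AddCommGroup S''] [Module ℂ S'']

theorem conjMap_trans (φ : S ≃ₗ[ℂ] S') (ψ : S' ≃ₗ[ℂ] S'') :
    conjMap (φ.trans ψ) = conjMap ψ ∘ conjMap φ := rfl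

theorem conjMap_symm_conjMap (φ : S ≃ₗ[ℂ] S') (A : Module.End ℂ S) :
    conjMap φ.symm (conjMap φ A) = A := by
  ext; simp [conjMap]

end conjMap

variable {V S : Type*} [AddCommGroup V] [Module ℝ V]
  [AddCommGroup S] [Module ℝ S] [Module ℂ S] [IsScalarTower ℝ ℂ S]

theorem conjMap_eq_conjAlgEquiv (φ : S ≃ₗ[ℂ] S) : conjMap φ = φ.conjAlgEquiv ℝ := rfl

variable (Q : QuadraticForm ℝ V) (γ : CliffordAlgebra Q →ₐ[ℝ] Module.End ℂ S)

/-- `Implements Q γ φ f` says that `Ad_γ(φ) = f`. -/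
def Implements (φ : S ≃ₗ[ℂ] S) (f : V →ₗ[ℝ] V) : Prop :=
  ∀ v, γ (ι Q (f v)) = conjMap φ (γ (ι Q v))

variable {Q γ} {φ ψ : S ≃ₗ[ℂ] S} {f g : V →ₗ[ℝ] V}

theorem memLip_trans (hφ : memLip Q γ φ) (hψ : memLip Q γ ψ) : memLip Q γ (ψ.trans φ) := by
  rw [memLip, conjMap_trans, Set.image_comp, hψ, hφ]

theorem memLip_symm (hφ : memLip Q γ φ) : memLip Q γ φ.symm := by
  have := congrArg (conjMap φ.symm '' ·) hφ
  simp only [Set.image_image, conjMap_symm_conjMap, Set.image_id'] at this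
  exact this.symm

theorem Implements.comp (hf : Implements Q γ φ f) (hg : Implements Q γ ψ g) :
    Implements Q γ (ψ.trans φ) (f ∘ₗ g) := fun v =>
  (hf (g v)).trans (congrArg (conjMap φ) (hg v))

theorem Implements.symm {f : V ≃ₗ[ℝ] V} (hf : Implements Q γ φ f) :
    Implements Q γ φ.symm (f.symm : V →ₗ[ℝ] V) := fun v => by
  have := congrArg (conjMap φ.symm) (hf (f.symm v))
  rw [conjMap_symm_conjMap] at this
  simpa using this.symm

theorem memLip_of_implements (hf : Implements Q γ φ f) (hsurj : Function.Surjective f) :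
    memLip Q γ φ := by
  ext A
  constructor
  · rintro ⟨_, ⟨v, rfl⟩, rfl⟩
    exact ⟨f v, hf v⟩
  · rintro ⟨w, rfl⟩
    obtain ⟨v, rfl⟩ := hsurj w
    exact ⟨_, ⟨v, rfl⟩, (hf v).symm⟩

theorem Implements.surjective (hγ : WeaklyFaithful Q γ) (hφ : memLip Q γ φ)
    (hf : Implements Q γ φ f) : Function.Surjective f := fun w => by
  have hw : γ (ι Q w) ∈ conjMap φ '' gammaV Q γ := by rw [hφ]; exact ⟨w, rfl⟩
  obtain ⟨_, ⟨v, rfl⟩, hv⟩ := hw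
  exact ⟨v, hγ ((hf v).trans hv)⟩

theorem Implements.bijective [FiniteDimensional ℝ V] (hγ : WeaklyFaithful Q γ)
    (hφ : memLip Q γ φ) (hf : Implements Q γ φ f) : Function.Bijective f :=
  have hsurj := hf.surjective hγ hφ
  ⟨LinearMap.injective_iff_surjective.mpr hsurj, hsurj⟩

theorem existsUnique_implements (hγ : WeaklyFaithful Q γ) (hφ : memLip Q γ φ) :
    ∃! f : V →ₗ[ℝ] V, Implements Q γ φ f :=
  LinearMap.existsUnique_apply_eq_of_injective (Γ := γ.toLinearMap ∘ₗ ι Q)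
    (T := (φ.conjAlgEquiv ℝ).toLinearMap) hγ fun v => by
      have hv : conjMap φ (γ (ι Q v)) ∈ gammaV Q γ := by rw [← hφ]; exact ⟨_, ⟨v, rfl⟩, rfl⟩
      obtain ⟨w, hw⟩ := hv
      exact ⟨w, hw⟩

theorem Implements.quadraticForm_apply [Nontrivial S] (hf : Implements Q γ φ f) (v : V) :
    Q (f v) = Q v := by
  apply (algebraMap ℝ (Module.End ℂ S)).injective
  rw [← γ.commutes, ← ι_sq_scalar, map_mul, hf v, conjMap_eq_conjAlgEquiv, ← map_mul, ← map_mul,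
    ι_sq_scalar, γ.commutes, AlgEquiv.commutes]

variable (Q γ) in
def adjointImage : Subgroup (V ≃ₗ[ℝ] V) where
  carrier := {f | ∃ φ, memLip Q γ φ ∧ Implements Q γ φ f}
  mul_mem' := fun ⟨φ, hφ, hf⟩ ⟨ψ, hψ, hg⟩ => ⟨ψ.trans φ, memLip_trans hφ hψ, hf.comp hg⟩
  one_mem' := ⟨LinearEquiv.refl ℂ S, memLip_of_implements (f := LinearMap.id) (fun _ => rfl)
    Function.surjective_id, fun _ => rfl⟩
  inv_mem' := fun ⟨φ, hφ, hf⟩ => ⟨φ.symm, memLip_symm hφ, hf.symm⟩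

variable (γ) in
def gammaEquiv (x : CliffordAlgebra Q) [Invertible x] : S ≃ₗ[ℂ] S :=
  LinearEquiv.ofLinearMap (γ x) (γ ⅟x)
    (by rw [← Module.End.mul_eq_comp, ← map_mul, mul_invOf_self, map_one, Module.End.one_eq_id])
    (by rw [← Module.End.mul_eq_comp, ← map_mul, invOf_mul_self, map_one, Module.End.one_eq_id])

theorem conjMap_gammaEquiv (x : CliffordAlgebra Q) [Invertible x] (y : CliffordAlgebra Q) :
    conjMap (gammaEquiv γ x) (γ y) = γ (x * y * ⅟x) := by
  rw [map_mul, map_mul]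
  rfl

section orthogonal

variable {h : BilinForm ℝ V}

theorem Implements.isometry [Nontrivial S] (hsymm : h.IsSymm)
    {γ : CliffordAlgebra h.toQuadraticMap →ₐ[ℝ] Module.End ℂ S} (hf : Implements _ γ φ f)
    (v w : V) : h (f v) (f w) = h v w :=
  hsymm.apply_eq_of_apply_self_eq hf.quadraticForm_apply v w

variable (γ : CliffordAlgebra h.toQuadraticMap →ₐ[ℝ] Module.End ℂ S)

theorem neg_reflection_mem_adjointImage (hsymm : h.IsSymm) {u : V} (hu : h u u ≠ 0) :
    DistribMulAction.toModuleAut ℝ V (-1 : ℝˣ) * h.reflection hu ∈ adjointImage _ γ := by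
  let : Invertible (h.toQuadraticMap u) := invertibleOfNonzero hu
  let := invertibleιOfInvertible h.toQuadraticMap u
  have himpl : Implements _ γ (gammaEquiv γ (ι _ u))
      (DistribMulAction.toModuleAut ℝ V (-1 : ℝˣ) * h.reflection hu : V ≃ₗ[ℝ] V) := fun v => by
    rw [conjMap_gammaEquiv, ι_mul_ι_mul_invOf_ι, LinearMap.BilinMap.polar_toQuadraticMap,
      hsymm.eq v u]
    congr 2
    rw [invOf_eq_inv]
    simp only [LinearEquiv.coe_toLinearMap_mul, Module.End.mul_apply, LinearEquiv.coe_coe,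
      DistribMulAction.toModuleAut_apply, DistribMulAction.toLinearEquiv_apply, Units.neg_smul,
      one_smul, LinearMap.BilinForm.reflection_apply, LinearMap.BilinMap.toQuadraticMap_apply]
    module
  exact ⟨_, memLip_of_implements himpl (LinearEquiv.surjective _), himpl⟩

variable [FiniteDimensional ℝ V] (hsymm : h.IsSymm) (hnd : h.Nondegenerate)
include hsymm hnd

theorem detSMul_mem_adjointImage {f : V ≃ₗ[ℝ] V} (hf : f ∈ h.orthogonalGroup) :
    LinearEquiv.detSMul f ∈ adjointImage _ γ := by
  refine (Subgroup.closure_le ((adjointImage _ γ).comap LinearEquiv.detSMul)).mpr ?_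
    (orthogonalGroup_le_closure_reflections hsymm hnd hf)
  rintro _ ⟨u, hu, rfl⟩
  rw [SetLike.mem_coe, Subgroup.mem_comap, detSMul_reflection]
  exact neg_reflection_mem_adjointImage γ hsymm hu

theorem mem_adjointImage_of_det_eq_one {f : V ≃ₗ[ℝ] V} (hf : f ∈ h.orthogonalGroup)
    (hdet : LinearEquiv.det f = 1) : f ∈ adjointImage _ γ := by
  have := detSMul_mem_adjointImage γ hsymm hnd hf
  rwa [LinearEquiv.detSMul_apply, hdet, map_one, one_mul] at this

theorem orthogonalGroup_le_adjointImage (heven : Even (finrank ℝ V)) :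
    h.orthogonalGroup ≤ adjointImage _ γ := by
  have hneg : DistribMulAction.toModuleAut ℝ V (-1 : ℝˣ) ∈ adjointImage _ γ :=
    mem_adjointImage_of_det_eq_one γ hsymm hnd (fun v w => by simp)
      (by rw [LinearEquiv.det_toModuleAut, heven.neg_one_pow])
  refine (orthogonalGroup_le_closure_reflections hsymm hnd).trans ((Subgroup.closure_le _).mpr ?_)
  rintro _ ⟨u, hu, rfl⟩
  have := mul_mem hneg (neg_reflection_mem_adjointImage γ hsymm hu)
  rwa [← mul_assoc, ← map_mul, neg_one_mul, neg_neg, map_one, one_mul] at this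

end orthogonal

end CpxCliffordRep

open CpxCliffordRep in
theorem adjoint_rep_isometry_hom_and_image_general
    {V : Type*} [AddCommGroup V] [Module ℝ V] [FiniteDimensional ℝ V]
    {S : Type*} [AddCommGroup S] [Module ℝ S] [Module ℂ S] [IsScalarTower ℝ ℂ S]
    [Nontrivial S]
    (h : LinearMap.BilinForm ℝ V) (hsymm : h.IsSymm) (hnd : h.Nondegenerate)
    (γ : CliffordAlgebra h.toQuadraticMap →ₐ[ℝ] Module.End ℂ S)
    (hγ : WeaklyFaithful h.toQuadraticMap γ) :
    -- existence and uniqueness of `Ad_γ(φ)`, which is a bijective isometry of `(V,h)`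
    (∀ φ : S ≃ₗ[ℂ] S, memLip h.toQuadraticMap γ φ →
        (∃! f : V →ₗ[ℝ] V, ∀ v : V,
            γ (CliffordAlgebra.ι h.toQuadraticMap (f v)) =
              conjMap φ (γ (CliffordAlgebra.ι h.toQuadraticMap v))) ∧
        (∀ f : V →ₗ[ℝ] V,
            (∀ v : V, γ (CliffordAlgebra.ι h.toQuadraticMap (f v)) =
              conjMap φ (γ (CliffordAlgebra.ι h.toQuadraticMap v))) →
            Function.Bijective f ∧ ∀ v w : V, h (f v) (f w) = h v w)) ∧
    -- `Ad_γ` is a group homomorphism: it sends composition to composition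
    (∀ (φ ψ : S ≃ₗ[ℂ] S), memLip h.toQuadraticMap γ φ → memLip h.toQuadraticMap γ ψ →
        ∀ (f g : V →ₗ[ℝ] V),
        (∀ v : V, γ (CliffordAlgebra.ι h.toQuadraticMap (f v)) =
            conjMap φ (γ (CliffordAlgebra.ι h.toQuadraticMap v))) →
        (∀ v : V, γ (CliffordAlgebra.ι h.toQuadraticMap (g v)) =
            conjMap ψ (γ (CliffordAlgebra.ι h.toQuadraticMap v))) →
        memLip h.toQuadraticMap γ (ψ.trans φ) ∧
        (∀ v : V, γ (CliffordAlgebra.ι h.toQuadraticMap ((f ∘ₗ g) v)) =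
            conjMap (ψ.trans φ) (γ (CliffordAlgebra.ι h.toQuadraticMap v)))) ∧
    -- even dimension: `Ad_γ` is surjective onto `O(V,h)`
    (Module.finrank ℝ V % 2 = 0 →
        ∀ f : V ≃ₗ[ℝ] V, (∀ v w : V, h (f v) (f w) = h v w) →
          ∃ φ : S ≃ₗ[ℂ] S, memLip h.toQuadraticMap γ φ ∧
            ∀ v : V, γ (CliffordAlgebra.ι h.toQuadraticMap (f v)) =
              conjMap φ (γ (CliffordAlgebra.ι h.toQuadraticMap v))) ∧
    -- odd dimension: the image of `Ad_γ` contains `SO(V,h)`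
    (Module.finrank ℝ V % 2 = 1 →
        ∀ f : V ≃ₗ[ℝ] V, (∀ v w : V, h (f v) (f w) = h v w) →
          LinearMap.det f.toLinearMap = 1 →
          ∃ φ : S ≃ₗ[ℂ] S, memLip h.toQuadraticMap γ φ ∧
            ∀ v : V, γ (CliffordAlgebra.ι h.toQuadraticMap (f v)) =
              conjMap φ (γ (CliffordAlgebra.ι h.toQuadraticMap v))) := by
  refine ⟨fun φ hφ => ⟨existsUnique_implements hγ hφ, fun f hf =>
      ⟨Implements.bijective hγ hφ hf, Implements.isometry hsymm hf⟩⟩,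
    fun φ ψ hφ hψ f g hf hg => ⟨memLip_trans hφ hψ, Implements.comp hf hg⟩,
    fun heven f hf => orthogonalGroup_le_adjointImage γ hsymm hnd (Nat.even_iff.mpr heven) hf,
    fun _ f hf hdet => mem_adjointImage_of_det_eq_one γ hsymm hnd hf (Units.ext ?_)⟩
  rwa [LinearEquiv.coe_det, Units.val_one]

open CpxCliffordRep in
/-- For weakly faithful `γ`, every `φ ∈ L_γ` induces a unique linear map `Ad_γ(φ)` of `V`,
which is a bijective isometry of `(V,h)`; `Ad_γ` is a group homomorphism `L_γ → O(V,h)`;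
if `dim V` is even then `Ad_γ` is surjective onto `O(V,h)`, and if `dim V` is odd then its
image contains `SO(V,h)`. -/
theorem adjoint_rep_isometry_hom_and_image
    {V : Type*} [AddCommGroup V] [Module ℝ V] [FiniteDimensional ℝ V]
    {S : Type*} [AddCommGroup S] [Module ℝ S] [Module ℂ S] [IsScalarTower ℝ ℂ S]
    [FiniteDimensional ℂ S] [Nontrivial S]
    (h : LinearMap.BilinForm ℝ V) (hsymm : h.IsSymm) (hnd : h.Nondegenerate)
    (γ : CliffordAlgebra h.toQuadraticMap →ₐ[ℝ] Module.End ℂ S)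
    (hγ : WeaklyFaithful h.toQuadraticMap γ) :
    -- existence and uniqueness of `Ad_γ(φ)`, which is a bijective isometry of `(V,h)`
    (∀ φ : S ≃ₗ[ℂ] S, memLip h.toQuadraticMap γ φ →
        (∃! f : V →ₗ[ℝ] V, ∀ v : V,
            γ (CliffordAlgebra.ι h.toQuadraticMap (f v)) =
              conjMap φ (γ (CliffordAlgebra.ι h.toQuadraticMap v))) ∧
        (∀ f : V →ₗ[ℝ] V,
            (∀ v : V, γ (CliffordAlgebra.ι h.toQuadraticMap (f v)) =
              conjMap φ (γ (CliffordAlgebra.ι h.toQuadraticMap v))) →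
            Function.Bijective f ∧ ∀ v w : V, h (f v) (f w) = h v w)) ∧
    -- `Ad_γ` is a group homomorphism: it sends composition to composition
    (∀ (φ ψ : S ≃ₗ[ℂ] S), memLip h.toQuadraticMap γ φ → memLip h.toQuadraticMap γ ψ →
        ∀ (f g : V →ₗ[ℝ] V),
        (∀ v : V, γ (CliffordAlgebra.ι h.toQuadraticMap (f v)) =
            conjMap φ (γ (CliffordAlgebra.ι h.toQuadraticMap v))) →
        (∀ v : V, γ (CliffordAlgebra.ι h.toQuadraticMap (g v)) =
            conjMap ψ (γ (CliffordAlgebra.ι h.toQuadraticMap v))) →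
        memLip h.toQuadraticMap γ (ψ.trans φ) ∧
        (∀ v : V, γ (CliffordAlgebra.ι h.toQuadraticMap ((f ∘ₗ g) v)) =
            conjMap (ψ.trans φ) (γ (CliffordAlgebra.ι h.toQuadraticMap v)))) ∧
    -- even dimension: `Ad_γ` is surjective onto `O(V,h)`
    (Module.finrank ℝ V % 2 = 0 →
        ∀ f : V ≃ₗ[ℝ] V, (∀ v w : V, h (f v) (f w) = h v w) →
          ∃ φ : S ≃ₗ[ℂ] S, memLip h.toQuadraticMap γ φ ∧
            ∀ v : V, γ (CliffordAlgebra.ι h.toQuadraticMap (f v)) =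
              conjMap φ (γ (CliffordAlgebra.ι h.toQuadraticMap v))) ∧
    -- odd dimension: the image of `Ad_γ` contains `SO(V,h)`
    (Module.finrank ℝ V % 2 = 1 →
        ∀ f : V ≃ₗ[ℝ] V, (∀ v w : V, h (f v) (f w) = h v w) →
          LinearMap.det f.toLinearMap = 1 →
          ∃ φ : S ≃ₗ[ℂ] S, memLip h.toQuadraticMap γ φ ∧
            ∀ v : V, γ (CliffordAlgebra.ι h.toQuadraticMap (f v)) =
              conjMap φ (γ (CliffordAlgebra.ι h.toQuadraticMap v))) :=
  adjoint_rep_isometry_hom_and_image_general h hsymm hnd γ hγ
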